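/- arXiv:2009.08532 — 5 statements merged into one kernel-verified Lean document; each statement's English description precedes it below -/
import Mathlib

section
/- A simple connected graph G with n vertices is radio graceful if and only if there exists an ordering x_1, ..., x_n of V(G) such that d(x_i, x_{i+Δ}) ≥ diam(G) − Δ + 1 for all Δ ∈ {1, ..., diam(G) − 1} and all i ∈ {1, ..., n − Δ}. -/
/-- `f` is a radio labeling of `G`: labels are positive and
`|f u - f v| ≥ diam G + 1 - d(u,v)` for all distinct `u, v`. -/
def IsRadioLabeling {V : Type*} (G : SimpleGraph V) (f : V → ℕ) : Prop :=
  (∀ v, 1 ≤ f v) ∧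
    ∀ u v, u ≠ v → (G.diam : ℤ) + 1 - G.dist u v ≤ |(f u : ℤ) - (f v : ℤ)|

lemma ediam_ne_top_aux {V : Type*} [Fintype V] (G : SimpleGraph V) (hG : G.Connected) :
    G.ediam ≠ ⊤ := by
  classical
  have hle : G.ediam ≤ (Fintype.card V : ℕ∞) := by
    apply SimpleGraph.ediam_le_of_edist_le
    intro u v
    obtain ⟨p⟩ := hG u v
    calc G.edist u v ≤ (p.toPath.1.length : ℕ∞) := SimpleGraph.edist_le _
      _ ≤ (Fintype.card V : ℕ∞) := by
          exact_mod_cast le_of_lt p.toPath.2.length_lt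
  exact ne_top_of_le_ne_top (by simp) hle

lemma dist_le_diam_aux {V : Type*} [Fintype V] (G : SimpleGraph V) (hG : G.Connected)
    (u v : V) : G.dist u v ≤ G.diam :=
  SimpleGraph.dist_le_diam (ediam_ne_top_aux G hG)

theorem radio_graceful_iff_ordering {V : Type*} [Fintype V] (G : SimpleGraph V)
    (hG : G.Connected) :
    (∃ f : V → ℕ, IsRadioLabeling G f ∧
        Set.range f = Set.Icc 1 (Fintype.card V)) ↔
      ∃ x : Fin (Fintype.card V) ≃ V,
        ∀ Δ ∈ Finset.Icc 1 (G.diam - 1), ∀ i : ℕ, ∀ h : i + Δ < Fintype.card V,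
          (G.diam : ℤ) - Δ + 1 ≤ G.dist (x ⟨i, by omega⟩) (x ⟨i + Δ, h⟩) := by
  constructor
  · rintro ⟨f, ⟨hf1, hf2⟩, hr⟩
    -- f is injective
    have hfinj : Function.Injective f := by
      intro u v huv
      by_contra hne
      have h1 := hf2 u v hne
      rw [huv] at h1
      simp only [sub_self, abs_zero] at h1
      have h2 : G.dist u v ≤ G.diam := dist_le_diam_aux G hG u v
      have : ((G.dist u v : ℤ)) ≤ (G.diam : ℤ) := by exact_mod_cast h2
      omega
    have hmem : ∀ v, f v ∈ Set.Icc 1 (Fintype.card V) := by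
      intro v; rw [← hr]; exact Set.mem_range_self v
    -- build equiv
    let g : V → Fin (Fintype.card V) := fun v =>
      ⟨f v - 1, by have := hmem v; simp only [Set.mem_Icc] at this; omega⟩
    have hginj : Function.Injective g := by
      intro u v huv
      apply hfinj
      have h1 := hf1 u
      have h2 := hf1 v
      have : f u - 1 = f v - 1 := congrArg Fin.val huv
      omega
    have hgbij : Function.Bijective g :=
      (Fintype.bijective_iff_injective_and_card g).mpr ⟨hginj, by simp⟩
    let e := Equiv.ofBijective g hgbij
    refine ⟨e.symm, ?_⟩
    have hfe : ∀ i : Fin (Fintype.card V), f (e.symm i) = i.val + 1 := by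
      intro i
      have : g (e.symm i) = i := e.apply_symm_apply i
      have hv : f (e.symm i) - 1 = i.val := congrArg Fin.val this
      have := hf1 (e.symm i)
      omega
    intro Δ hΔ i h
    simp only [Finset.mem_Icc] at hΔ
    set u := e.symm ⟨i, by omega⟩ with hu
    set v := e.symm ⟨i + Δ, h⟩ with hv
    have hne : u ≠ v := by
      intro hcon
      have := e.symm.injective hcon
      have := congrArg Fin.val this
      simp at this
      omega
    have h1 := hf2 u v hne
    have h2 : f u = i + 1 := hfe _
    have h3 : f v = i + Δ + 1 := hfe _
    have habs : |(((i + 1 : ℕ)) : ℤ) - (((i + Δ + 1 : ℕ)) : ℤ)| = (Δ : ℤ) := by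
      rw [abs_sub_comm, abs_of_nonneg (by push_cast; omega)]
      push_cast; ring
    rw [h2, h3, habs] at h1
    omega
  · rintro ⟨x, hx⟩
    refine ⟨fun v => (x.symm v).val + 1, ⟨fun v => Nat.le_add_left 1 _, ?_⟩, ?_⟩
    · -- radio labeling condition
      have key : ∀ u v : V, (x.symm u).val < (x.symm v).val →
          (G.diam : ℤ) + 1 - G.dist u v ≤
            |(((x.symm u).val + 1 : ℕ) : ℤ) - (((x.symm v).val + 1 : ℕ) : ℤ)| := by
        intro u v hlt
        have hne : u ≠ v := by
          rintro rfl; exact lt_irrefl _ hlt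
        have hdpos : 0 < G.dist u v := hG.pos_dist_of_ne hne
        obtain ⟨i, hi⟩ : ∃ i, i = (x.symm u).val := ⟨_, rfl⟩
        obtain ⟨j, hj⟩ : ∃ j, j = (x.symm v).val := ⟨_, rfl⟩
        rw [← hi, ← hj] at hlt ⊢
        obtain ⟨Δ, hΔdef⟩ : ∃ Δ, Δ = j - i := ⟨_, rfl⟩
        have hΔ1 : 1 ≤ Δ := by omega
        have habs : |(((i + 1 : ℕ)) : ℤ) - (((j + 1 : ℕ)) : ℤ)| = (Δ : ℤ) := by
          rw [abs_sub_comm, abs_of_nonneg (by push_cast; omega)]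
          push_cast; omega
        rw [habs]
        by_cases hcase : Δ ≤ G.diam - 1 ∧ 1 ≤ G.diam
        · have hmem : Δ ∈ Finset.Icc 1 (G.diam - 1) := by
            simp only [Finset.mem_Icc]; omega
          have hjlt : i + Δ < Fintype.card V := by
            have := (x.symm v).isLt; omega
          have h1 := hx Δ hmem i hjlt
          have hxu : x ⟨i, by omega⟩ = u := by
            have heq : (⟨i, by omega⟩ : Fin (Fintype.card V)) = x.symm u := Fin.ext hi
            rw [heq, x.apply_symm_apply]
          have hxv : x ⟨i + Δ, hjlt⟩ = v := by
            have heq : (⟨i + Δ, hjlt⟩ : Fin (Fintype.card V)) = x.symm v :=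
              Fin.ext (by simp only []; omega)
            rw [heq, x.apply_symm_apply]
          rw [hxu, hxv] at h1
          omega
        · -- Δ ≥ diam
          have hΔge : G.diam ≤ Δ := by omega
          have : (G.diam : ℤ) ≤ (Δ : ℤ) := by exact_mod_cast hΔge
          have : (1 : ℤ) ≤ G.dist u v := by exact_mod_cast hdpos
          omega
      intro u v hne
      rcases lt_trichotomy ((x.symm u).val) ((x.symm v).val) with h | h | h
      · exact key u v h
      · exact absurd (x.symm.injective (Fin.ext h)) hne
      · rw [G.dist_comm, abs_sub_comm]
        exact key v u h
    · -- range
      ext m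
      simp only [Set.mem_range, Set.mem_Icc]
      constructor
      · rintro ⟨v, rfl⟩
        have := (x.symm v).isLt
        omega
      · rintro ⟨h1, h2⟩
        refine ⟨x ⟨m - 1, by omega⟩, ?_⟩
        rw [x.symm_apply_apply]
        simp; omega
end

section
/- In the graph K₂ □ K₃ □ K₃, there do not exist 7 vertices y₁, ..., y₇ with d(y_i, y_{i+1}) = 3 for all 1 ≤ i ≤ 6 and d(y_i, y_{i+2}) ≥ 2 for all 1 ≤ i ≤ 5, where all seven vertices are pairwise distinct. -/
set_option maxHeartbeats 1000000


/-- Hamming distance on triples: the number of coordinates in which they differ. -/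
def hdist {a b c : ℕ} (x y : Fin a × Fin b × Fin c) : ℕ :=
  (if x.1 = y.1 then 0 else 1) + (if x.2.1 = y.2.1 then 0 else 1) +
    (if x.2.2 = y.2.2 then 0 else 1)

lemma fin2_trans (a b c : Fin 2) (h1 : a ≠ b) (h2 : b ≠ c) : a = c := by omega

lemma fin3_cycle (a b c d : Fin 3) (h1 : a ≠ b) (h2 : b ≠ c) (h3 : a ≠ c)
    (h4 : d ≠ b) (h5 : d ≠ c) : d = a := by omega

lemma hdist3 {a b c : ℕ} {x y : Fin a × Fin b × Fin c} (h : hdist x y = 3) :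
    x.1 ≠ y.1 ∧ x.2.1 ≠ y.2.1 ∧ x.2.2 ≠ y.2.2 := by
  unfold hdist at h
  split_ifs at h <;> simp_all

lemma hdist2 {a b c : ℕ} {x y : Fin a × Fin b × Fin c} (h : 2 ≤ hdist x y)
    (h1 : x.1 = y.1) : x.2.1 ≠ y.2.1 ∧ x.2.2 ≠ y.2.2 := by
  unfold hdist at h
  split_ifs at h <;> simp_all

theorem no_seven_consecutive :
    ¬ ∃ y : Fin 7 → Fin 2 × Fin 3 × Fin 3,
        Function.Injective y ∧
        (∀ i : ℕ, ∀ h : i + 1 < 7, hdist (y ⟨i, by omega⟩) (y ⟨i + 1, h⟩) = 3) ∧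
        (∀ i : ℕ, ∀ h : i + 2 < 7, 2 ≤ hdist (y ⟨i, by omega⟩) (y ⟨i + 2, h⟩)) := by
  rintro ⟨y, hinj, h1, h2⟩
  -- step-1 facts
  have d0 := hdist3 (h1 0 (by omega))
  have d1 := hdist3 (h1 1 (by omega))
  have d2 := hdist3 (h1 2 (by omega))
  have d3 := hdist3 (h1 3 (by omega))
  have d4 := hdist3 (h1 4 (by omega))
  have d5 := hdist3 (h1 5 (by omega))
  -- first coordinate alternates, so agrees at distance 2
  have f02 : (y ⟨0, by omega⟩).1 = (y ⟨2, by omega⟩).1 := fin2_trans _ _ _ d0.1 d1.1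
  have f13 : (y ⟨1, by omega⟩).1 = (y ⟨3, by omega⟩).1 := fin2_trans _ _ _ d1.1 d2.1
  have f24 : (y ⟨2, by omega⟩).1 = (y ⟨4, by omega⟩).1 := fin2_trans _ _ _ d2.1 d3.1
  have f35 : (y ⟨3, by omega⟩).1 = (y ⟨5, by omega⟩).1 := fin2_trans _ _ _ d3.1 d4.1
  have f46 : (y ⟨4, by omega⟩).1 = (y ⟨6, by omega⟩).1 := fin2_trans _ _ _ d4.1 d5.1
  -- step-2 facts on the two Fin 3 coordinates
  have e0 := hdist2 (h2 0 (by omega)) f02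
  have e1 := hdist2 (h2 1 (by omega)) f13
  have e2 := hdist2 (h2 2 (by omega)) f24
  have e3 := hdist2 (h2 3 (by omega)) f35
  have e4 := hdist2 (h2 4 (by omega)) f46
  -- second coordinate has period 3
  have s30 : (y ⟨3, by omega⟩).2.1 = (y ⟨0, by omega⟩).2.1 :=
    fin3_cycle _ _ _ _ d0.2.1 d1.2.1 e0.1 (Ne.symm e1.1) (Ne.symm d2.2.1)
  have s41 : (y ⟨4, by omega⟩).2.1 = (y ⟨1, by omega⟩).2.1 :=
    fin3_cycle _ _ _ _ d1.2.1 d2.2.1 e1.1 (Ne.symm e2.1) (Ne.symm d3.2.1)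
  have s52 : (y ⟨5, by omega⟩).2.1 = (y ⟨2, by omega⟩).2.1 :=
    fin3_cycle _ _ _ _ d2.2.1 d3.2.1 e2.1 (Ne.symm e3.1) (Ne.symm d4.2.1)
  have s63 : (y ⟨6, by omega⟩).2.1 = (y ⟨3, by omega⟩).2.1 :=
    fin3_cycle _ _ _ _ d3.2.1 d4.2.1 e3.1 (Ne.symm e4.1) (Ne.symm d5.2.1)
  -- third coordinate has period 3
  have t30 : (y ⟨3, by omega⟩).2.2 = (y ⟨0, by omega⟩).2.2 :=
    fin3_cycle _ _ _ _ d0.2.2 d1.2.2 e0.2 (Ne.symm e1.2) (Ne.symm d2.2.2)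
  have t41 : (y ⟨4, by omega⟩).2.2 = (y ⟨1, by omega⟩).2.2 :=
    fin3_cycle _ _ _ _ d1.2.2 d2.2.2 e1.2 (Ne.symm e2.2) (Ne.symm d3.2.2)
  have t52 : (y ⟨5, by omega⟩).2.2 = (y ⟨2, by omega⟩).2.2 :=
    fin3_cycle _ _ _ _ d2.2.2 d3.2.2 e2.2 (Ne.symm e3.2) (Ne.symm d4.2.2)
  have t63 : (y ⟨6, by omega⟩).2.2 = (y ⟨3, by omega⟩).2.2 :=
    fin3_cycle _ _ _ _ d3.2.2 d4.2.2 e3.2 (Ne.symm e4.2) (Ne.symm d5.2.2)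
  -- hence y 6 = y 0
  have hf : (y ⟨6, by omega⟩).1 = (y ⟨0, by omega⟩).1 :=
    ((f02.trans f24).trans f46).symm
  have hs : (y ⟨6, by omega⟩).2.1 = (y ⟨0, by omega⟩).2.1 := s63.trans s30
  have ht : (y ⟨6, by omega⟩).2.2 = (y ⟨0, by omega⟩).2.2 := t63.trans t30
  have hy : y ⟨6, by omega⟩ = y ⟨0, by omega⟩ :=
    Prod.ext hf (Prod.ext hs ht)
  exact absurd (congrArg Fin.val (hinj hy)) (by norm_num)
end

section
/- Let 2 ≤ ℓ ≤ m ≤ n with m, n ≥ 3 and not (ℓ = 2, m = 3, n = 3). Then the Hamming graph K_ℓ □ K_m □ K_n is radio graceful; equivalently, there exists an ordering x₁, ..., x_{ℓmn} of Fin ℓ × Fin m × Fin n such that consecutive vertices have Hamming distance exactly 3 and vertices two apart have Hamming distance at least 2. -/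
def IsRadioOrdering {N a b c : ℕ} (x : Fin N ≃ Fin a × Fin b × Fin c) : Prop :=
  (∀ i : ℕ, ∀ h : i + 1 < N, hdist (x ⟨i, by omega⟩) (x ⟨i + 1, h⟩) = 3) ∧
    (∀ i : ℕ, ∀ h : i + 2 < N, 2 ≤ hdist (x ⟨i, by omega⟩) (x ⟨i + 2, h⟩))

lemma hdist_eq_three {a b c : ℕ} {x y : Fin a × Fin b × Fin c}
    (h₁ : x.1 ≠ y.1) (h₂ : x.2.1 ≠ y.2.1) (h₃ : x.2.2 ≠ y.2.2) : hdist x y = 3 := by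
  simp [hdist, h₁, h₂, h₃]

lemma two_le_hdist {a b c : ℕ} {x y : Fin a × Fin b × Fin c}
    (h₁₂ : (x.1, x.2.1) ≠ (y.1, y.2.1)) (h₃ : x.2.2 ≠ y.2.2) : 2 ≤ hdist x y := by
  by_cases h₁ : x.1 = y.1
  · have h₂ : x.2.1 ≠ y.2.1 := fun h₂ => h₁₂ (by rw [h₁, h₂])
    simp [hdist, h₂, h₃]
  · simp [hdist, h₁, h₃]

theorem exists_isRadioOrdering_of_seq {a b c : ℕ} (v : ℕ → Fin a × Fin b × Fin c)
    (hinj : ∀ i < a * b * c, ∀ j < a * b * c, v i = v j → i = j)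
    (hstep₁ : ∀ i, i + 1 < a * b * c → hdist (v i) (v (i + 1)) = 3)
    (hstep₂ : ∀ i, i + 2 < a * b * c → 2 ≤ hdist (v i) (v (i + 2))) :
    ∃ x : Fin (a * b * c) ≃ Fin a × Fin b × Fin c, IsRadioOrdering x := by
  have hbij : Function.Bijective fun i : Fin (a * b * c) => v i := by
    refine (Fintype.bijective_iff_injective_and_card _).2 ⟨?_, by simp [mul_assoc]⟩
    exact fun i j h => Fin.ext (hinj i i.2 j j.2 h)
  exact ⟨Equiv.ofBijective _ hbij, fun i h => hstep₁ i h, fun i h => hstep₂ i h⟩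

lemma Nat.not_modEq_add {n i k : ℕ} (hk : 0 < k) (hkn : k < n) : ¬i ≡ i + k [MOD n] :=
  fun h => absurd (Nat.le_of_dvd hk (by simpa using (Nat.modEq_iff_dvd' (by omega)).1 h)) (by omega)

lemma Fin.ofNat_eq_ofNat_iff_modEq {n a b : ℕ} [NeZero n] :
    Fin.ofNat n a = Fin.ofNat n b ↔ a ≡ b [MOD n] := by
  simp [Fin.ext_iff, Nat.ModEq]

def twist (L : ℕ) (s : ℕ → ℕ) (i : ℕ) : ℕ := i / L + s (i % L)

section twist

variable {L : ℕ} {s : ℕ → ℕ}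

lemma twist_of_lt {j : ℕ} (hj : j < L) : twist L s j = s j := by
  simp [twist, Nat.div_eq_of_lt hj, Nat.mod_eq_of_lt hj]

lemma twist_mul_add (hL : 0 < L) (q j : ℕ) : twist L s (L * q + j) = q + twist L s j := by
  simp only [twist, Nat.mul_add_div hL, Nat.mul_add_mod]
  ring

lemma twist_add_of_le {j : ℕ} (hL : 0 < L) (hj : L ≤ j) :
    twist L s j = 1 + twist L s (j - L) := by
  conv_lhs => rw [show j = L * 1 + (j - L) by omega]
  exact twist_mul_add hL 1 _

lemma twist_add_eq_ite {r k : ℕ} (hr : r < L) (hk : k ≤ L) :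
    twist L s (r + k) = if r + k < L then s (r + k) else 1 + s (r + k - L) := by
  split_ifs with h
  · exact twist_of_lt h
  · rw [twist_add_of_le (by omega) (by omega), twist_of_lt (by omega)]

lemma not_modEq_twist_add {n k : ℕ} (hL : 0 < L)
    (hs : ∀ r < L, ¬twist L s r ≡ twist L s (r + k) [MOD n]) (i : ℕ) :
    ¬twist L s i ≡ twist L s (i + k) [MOD n] := by
  have hi : i = L * (i / L) + i % L := (Nat.div_add_mod i L).symm
  rw [hi, add_assoc, twist_mul_add hL, twist_mul_add hL]
  exact fun h => hs _ (Nat.mod_lt i hL) (Nat.ModEq.add_left_cancel' _ h)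

lemma mod_mul_eq_of_twist_modEq {α : Type*} {f : ℕ → α} {n i j : ℕ}
    (hf : ∀ i j, f i = f j → i % L = j % L) (hfij : f i = f j)
    (hij : twist L s i ≡ twist L s j [MOD n]) : i % (L * n) = j % (L * n) := by
  have hr := hf i j hfij
  unfold twist at hij
  rw [hr] at hij
  have hq : i / L % n = j / L % n := Nat.ModEq.add_right_cancel' _ hij
  rw [Nat.mod_mul, Nat.mod_mul, hr, hq]

end twist

def layer {α : Type*} (L n : ℕ) [NeZero n] (s : ℕ → ℕ) (f : ℕ → α) (i : ℕ) : α × Fin n :=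
  (f i, Fin.ofNat n (twist L s i))

section layer

variable {α : Type*} {L n : ℕ} [NeZero n] {s : ℕ → ℕ} {f : ℕ → α}

lemma layer_mod_eq (hf : ∀ i j, f i = f j → i % L = j % L) {i j : ℕ}
    (h : layer L n s f i = layer L n s f j) : i % (L * n) = j % (L * n) :=
  mod_mul_eq_of_twist_modEq hf (congrArg Prod.fst h)
    (Fin.ofNat_eq_ofNat_iff_modEq.1 (congrArg Prod.snd h))

lemma ofNat_twist_ne_add {k : ℕ} (hL : 0 < L)
    (hs : ∀ r < L, ¬twist L s r ≡ twist L s (r + k) [MOD n]) (i : ℕ) :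
    Fin.ofNat n (twist L s i) ≠ Fin.ofNat n (twist L s (i + k)) :=
  fun h => not_modEq_twist_add hL hs i (Fin.ofNat_eq_ofNat_iff_modEq.1 h)

end layer

-- The last value 2 differs from its predecessor and, as `m ≥ 3`, from the height
-- `1 + rowShift ℓ 0 = 1` that follows it at the start of the next round.
def rowShift (ℓ r : ℕ) : ℕ := if r + 1 = ℓ then 2 else r % 2

lemma not_modEq_twist_rowShift {ℓ m : ℕ} (hl : 2 ≤ ℓ) (hm : 3 ≤ m) :
    ∀ r < ℓ, ¬twist ℓ (rowShift ℓ) r ≡ twist ℓ (rowShift ℓ) (r + 1) [MOD m] := by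
  intro r hr
  rw [twist_of_lt hr, twist_add_eq_ite hr (by omega)]
  unfold rowShift
  split_ifs <;> intro h <;> have := h.eq_of_lt_of_lt (by omega) (by omega) <;> omega

-- Period four, run forwards or backwards according to `L mod 4`, so that the last two heights of
-- a round avoid `1 + s 0` and the last one avoids `1 + s 1`; all heights involved are below four.
def layerShift (L r : ℕ) : ℕ := if L % 4 < 2 then r % 4 else (3 * r + 1) % 4

lemma not_modEq_twist_layerShift {L n k : ℕ} (hL : 2 ≤ L) (hn : 4 ≤ n) (hk₀ : 0 < k)
    (hk : k ≤ 2) :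
    ∀ r < L, ¬twist L (layerShift L) r ≡ twist L (layerShift L) (r + k) [MOD n] := by
  intro r hr
  rw [twist_of_lt hr, twist_add_eq_ite hr (by omega)]
  unfold layerShift
  split_ifs <;> intro h <;> have := h.eq_of_lt_of_lt (by omega) (by omega) <;> omega

theorem exists_isRadioOrdering_of_four_le {ℓ m n : ℕ} (hl : 2 ≤ ℓ) (hm : 3 ≤ m)
    (hn : 4 ≤ n) :
    ∃ x : Fin (ℓ * m * n) ≃ Fin ℓ × Fin m × Fin n, IsRadioOrdering x := by
  have : NeZero ℓ := ⟨by omega⟩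
  have : NeZero m := ⟨by omega⟩
  have : NeZero n := ⟨by omega⟩
  have hL : 6 ≤ ℓ * m := Nat.mul_le_mul hl hm
  set y := layer ℓ m (rowShift ℓ) (Fin.ofNat ℓ)
  set v : ℕ → Fin ℓ × Fin m × Fin n :=
    fun i => Equiv.prodAssoc _ _ _ (layer (ℓ * m) n (layerShift (ℓ * m)) y i)
  have hy_mod : ∀ i j, y i = y j → i % (ℓ * m) = j % (ℓ * m) := fun i j =>
    layer_mod_eq fun i j h => Fin.ofNat_eq_ofNat_iff_modEq.1 h
  have hv_mod : ∀ i j, v i = v j → i % (ℓ * m * n) = j % (ℓ * m * n) := fun i j h =>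
    layer_mod_eq hy_mod ((Equiv.prodAssoc _ _ _).injective h)
  apply exists_isRadioOrdering_of_seq v
  · intro i hi j hj h
    simpa [Nat.mod_eq_of_lt hi, Nat.mod_eq_of_lt hj] using hv_mod i j h
  · intro i _
    exact hdist_eq_three
      (fun h => Nat.not_modEq_add one_pos hl (Fin.ofNat_eq_ofNat_iff_modEq.1 h))
      (ofNat_twist_ne_add (by omega) (not_modEq_twist_rowShift hl hm) i)
      (ofNat_twist_ne_add (by omega)
        (not_modEq_twist_layerShift (by omega) hn one_pos one_le_two) i)
  · intro i _
    exact two_le_hdist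
      (fun h => Nat.not_modEq_add two_pos (by omega) (hy_mod i (i + 2) h))
      (ofNat_twist_ne_add (by omega) (not_modEq_twist_layerShift (by omega) hn two_pos le_rfl) i)

theorem exists_isRadioOrdering_three :
    ∃ x : Fin (3 * 3 * 3) ≃ Fin 3 × Fin 3 × Fin 3, IsRadioOrdering x := by
  -- In base three, `9a + 3b + c ↦ (c, c + a, c + b + 2a)`, an invertible linear map over `𝔽₃`.
  let v : ℕ → Fin 3 × Fin 3 × Fin 3 := fun i =>
    (Fin.ofNat 3 i, Fin.ofNat 3 (i + i / 9), Fin.ofNat 3 (i + i / 3 + 2 * (i / 9)))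
  have hstep₁ : ∀ i < 26, hdist (v i) (v (i + 1)) = 3 := by decide
  have hstep₂ : ∀ i < 25, 2 ≤ hdist (v i) (v (i + 2)) := by decide
  exact exists_isRadioOrdering_of_seq v (by decide) (fun i hi => hstep₁ i (by omega))
    (fun i hi => hstep₂ i (by omega))

theorem hamming_radio_graceful (ℓ m n : ℕ) (hl : 2 ≤ ℓ) (hlm : ℓ ≤ m) (hmn : m ≤ n)
    (hm : 3 ≤ m) (hexc : ¬(ℓ = 2 ∧ m = 3 ∧ n = 3)) :
    ∃ x : Fin (ℓ * m * n) ≃ Fin ℓ × Fin m × Fin n,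
      (∀ i : ℕ, ∀ h : i + 1 < ℓ * m * n, hdist (x ⟨i, by omega⟩) (x ⟨i + 1, h⟩) = 3) ∧
      (∀ i : ℕ, ∀ h : i + 2 < ℓ * m * n, 2 ≤ hdist (x ⟨i, by omega⟩) (x ⟨i + 2, h⟩)) := by
  obtain rfl | hn : n = 3 ∨ 4 ≤ n := by omega
  · obtain rfl : m = 3 := by omega
    obtain rfl : ℓ = 3 := by omega
    exact exists_isRadioOrdering_three
  · exact exists_isRadioOrdering_of_four_le hl hm hn
end

section
/- Let ℓ, m, n ≥ 2. Define a sequence x₁, ..., x_{ℓmn} in ℤ/ℓ × ℤ/m × ℤ/n as in the paper's construction: group the indices into ℓmn/lcm(ℓ,m,n) blocks of length L = lcm(ℓ,m,n); within the k-th block, row r (0-indexed) is (s_k + (r, r, r)) where s_k is the block's seed; s₁ = (0,0,0), and s_{k} is obtained from the last row of block k−1 by adding (0,1,0) if k ≡ 1 (mod λ) with λ = n·lcm(ℓ,m)/lcm(ℓ,m,n), and by adding (0,0,1) otherwise, then resetting the first coordinate to 0 and subtracting the final diagonal shift appropriately so the seed has first coordinate 0. Then the sequence x₁, ..., x_{ℓmn}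 is a permutation of ℤ/ℓ × ℤ/m × ℤ/n (no repetitions). -/
/-- The paper's ordering of the vertices of `K_ℓ □ K_m □ K_n` (0-indexed).
Index `h` lies in block `k = h / L` (`L = lcm(ℓ,m,n)`) at row `r = h % L`;
block `k` has seed `(0, b, b*(λ-1) + c)` where `b = k / λ`, `c = k % λ`, and
`λ = n·lcm(ℓ,m)/lcm(ℓ,m,n)`; the row-`r` entry is the seed plus `(r,r,r)`. -/
def paperSeq (ℓ m n : ℕ) (h : ℕ) : ZMod ℓ × ZMod m × ZMod n :=
  let L := Nat.lcm (Nat.lcm ℓ m) n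
  let lam := n * Nat.lcm ℓ m / L
  let r := h % L
  let k := h / L
  let b := k / lam
  let c := k % lam
  (((r : ℕ) : ZMod ℓ), ((b + r : ℕ) : ZMod m), ((b * (lam - 1) + c + r : ℕ) : ZMod n))

/-!
Write an index below `ℓmn` as `h = (b λ + c) L + r` with `r < L`, `c < λ` and `b < gcd(ℓ,m)`;
the last bound holds because `λ = gcd(lcm(ℓ,m), n)`, so that `ℓmn = gcd(ℓ,m) · λ · L`. As both
sides have `ℓmn` elements, injectivity suffices, and it comes from one step applied twice: if
`r ≡ r' (mod p)` and `x + r ≡ x' + r' (mod q)` with `x, x' < gcd(p,q)`, then reducing both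
congruences mod `gcd(p,q)` gives `x = x'`, hence `r ≡ r' (mod lcm(p,q))`. With `(p,q) = (ℓ,m)`
this recovers `b` and `r mod lcm(ℓ,m)`; cancelling `b(λ-1)` in the last coordinate and taking
`(p,q) = (lcm(ℓ,m), n)` recovers `c` and `r mod L`, i.e. `r`.
-/

namespace Nat

theorem eq_and_modEq_lcm_of_modEq_of_add_modEq {p q x x' r r' : ℕ} (hx : x < gcd p q)
    (hx' : x' < gcd p q) (hp : r ≡ r' [MOD p]) (hq : x + r ≡ x' + r' [MOD q]) :
    x = x' ∧ r ≡ r' [MOD lcm p q] := by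
  have hxx' : x ≡ x' [MOD gcd p q] :=
    (hp.of_dvd (gcd_dvd_left p q)).add_right_cancel (hq.of_dvd (gcd_dvd_right p q))
  obtain rfl := hxx'.eq_of_lt_of_lt hx hx'
  exact ⟨rfl, mod_lcm hp (hq.add_left_cancel' x)⟩

theorem mul_div_lcm_eq_gcd {a b : ℕ} (ha : 0 < a) (hb : 0 < b) : a * b / lcm a b = gcd a b := by
  rw [← gcd_mul_lcm, Nat.mul_div_cancel _ (lcm_pos ha hb)]

theorem mul_mul_eq_gcd_mul_gcd_mul_lcm (ℓ m n : ℕ) :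
    ℓ * m * n = gcd ℓ m * gcd (lcm ℓ m) n * lcm (lcm ℓ m) n := by
  rw [mul_assoc _ (gcd _ _), gcd_mul_lcm, ← mul_assoc, gcd_mul_lcm]

end Nat

theorem paperSeq_injOn {ℓ m n : ℕ} (hℓ : 0 < ℓ) (hm : 0 < m) (hn : 0 < n) :
    Set.InjOn (paperSeq ℓ m n) (Set.Iio (ℓ * m * n)) := by
  intro h hh h' hh' heq
  simp only [paperSeq, Prod.mk.injEq, ZMod.natCast_eq_natCast_iff] at heq
  set M := ℓ.lcm m
  set L := M.lcm n
  set lam := M.gcd n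
  have hL : 0 < L := Nat.lcm_pos (Nat.lcm_pos hℓ hm) hn
  have hlam : n * M / L = lam := by rw [mul_comm, Nat.mul_div_lcm_eq_gcd (Nat.lcm_pos hℓ hm) hn]
  have block_lt : ∀ x < ℓ * m * n, x / L / lam < ℓ.gcd m := fun x hx => by
    rw [Nat.div_div_eq_div_mul]
    refine Nat.div_lt_of_lt_mul (hx.trans_eq ?_)
    rw [Nat.mul_mul_eq_gcd_mul_gcd_mul_lcm]
    ring
  rw [hlam] at heq
  obtain ⟨h₁, h₂, h₃⟩ := heq
  obtain ⟨hb, hrM⟩ :=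
    Nat.eq_and_modEq_lcm_of_modEq_of_add_modEq (block_lt h hh) (block_lt h' hh') h₁ h₂
  rw [hb, add_assoc, add_assoc] at h₃
  have hlam_pos : 0 < lam := Nat.gcd_pos_of_pos_right M hn
  obtain ⟨hc, hrL⟩ := Nat.eq_and_modEq_lcm_of_modEq_of_add_modEq (Nat.mod_lt _ hlam_pos)
    (Nat.mod_lt _ hlam_pos) hrM (h₃.add_left_cancel' _)
  have hr : h % L = h' % L := hrL.eq_of_lt_of_lt (Nat.mod_lt _ hL) (Nat.mod_lt _ hL)
  calc h = L * (lam * (h / L / lam) + h / L % lam) + h % L := by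
        rw [Nat.div_add_mod, Nat.div_add_mod]
    _ = L * (lam * (h' / L / lam) + h' / L % lam) + h' % L := by rw [hb, hc, hr]
    _ = h' := by rw [Nat.div_add_mod, Nat.div_add_mod]

theorem paperSeq_bijective (ℓ m n : ℕ) (hl : 2 ≤ ℓ) (hm : 2 ≤ m) (hn : 2 ≤ n) :
    Function.Bijective (fun h : Fin (ℓ * m * n) => paperSeq ℓ m n h.val) := by
  have : NeZero ℓ := ⟨by omega⟩
  have : NeZero m := ⟨by omega⟩
  have : NeZero n := ⟨by omega⟩
  rw [Fintype.bijective_iff_injective_and_card]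
  refine ⟨fun h h' heq => Fin.ext ?_, by simp [mul_assoc]⟩
  exact paperSeq_injOn (by omega) (by omega) (by omega) h.isLt h'.isLt heq
end

section
/- Let ℓ, m, n ≥ 2, λ = n·lcm(ℓ,m)/lcm(ℓ,m,n), and for k = (b−1)λ + c with 1 ≤ c ≤ λ and 1 ≤ b ≤ gcd(ℓ,m), define the seed s_k = (0, b−1 mod m, ((b−1)(λ−1) + c − 1) mod n) ∈ ℤ/ℓ × ℤ/m × ℤ/n. Then the map k ↦ s_k is injective on {1, ..., ℓmn/lcm(ℓ,m,n)}. -/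
/-! The index `k` is recovered from its seed by division with remainder by
`λ = gcd(lcm(ℓ,m), n)`: the quotient `b < gcd(ℓ,m) ≤ m` is read off the second coordinate,
and once `b` is known the remainder `c < λ ≤ n` is read off the third. -/

/-- The seed of the `k`-th block (0-indexed): for `k = b·λ + c` with `0 ≤ c < λ`,
`s_k = (0, b, b·(λ−1) + c)` where `λ = n·lcm(ℓ,m)/lcm(ℓ,m,n)`. -/
def seed (ℓ m n : ℕ) (k : ℕ) : ZMod ℓ × ZMod m × ZMod n :=
  let lam := n * Nat.lcm ℓ m / Nat.lcm (Nat.lcm ℓ m) n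
  ((0 : ZMod ℓ), ((k / lam : ℕ) : ZMod m),
    (((k / lam) * (lam - 1) + k % lam : ℕ) : ZMod n))

theorem Nat.mul_div_lcm {a b : ℕ} (h : a.lcm b ≠ 0) : a * b / a.lcm b = a.gcd b := by
  rw [← Nat.gcd_mul_lcm, Nat.mul_div_cancel _ (Nat.pos_of_ne_zero h)]

theorem Nat.mul_mul_div_lcm_lcm {ℓ m n : ℕ} (h : (ℓ.lcm m).lcm n ≠ 0) :
    ℓ * m * n / (ℓ.lcm m).lcm n = ℓ.gcd m * (ℓ.lcm m).gcd n :=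
  calc ℓ * m * n / (ℓ.lcm m).lcm n = ℓ.gcd m * (ℓ.lcm m * n) / (ℓ.lcm m).lcm n := by
        rw [← Nat.gcd_mul_lcm ℓ m, mul_assoc]
    _ = ℓ.gcd m * (ℓ.lcm m * n / (ℓ.lcm m).lcm n) := Nat.mul_div_assoc _ (Nat.lcm_dvd_mul _ _)
    _ = ℓ.gcd m * (ℓ.lcm m).gcd n := by rw [Nat.mul_div_lcm h]

theorem injOn_Iio_mul_divMod_cast {a g m n : ℕ} (ham : a ≤ m) (hgn : g ≤ n) :
    Set.InjOn (fun k : ℕ => (((k / g : ℕ) : ZMod m), ((k / g * (g - 1) + k % g : ℕ) : ZMod n)))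
      (Set.Iio (a * g)) := by
  intro k hk k' hk' h
  have hg : 0 < g := Nat.pos_of_mul_pos_left (Nat.zero_lt_of_lt hk)
  have hquot_lt {j : ℕ} (hj : j ∈ Set.Iio (a * g)) : j / g ∈ Set.Iio m :=
    ((Nat.div_lt_iff_lt_mul hg).2 hj).trans_le ham
  have hrem_lt (j : ℕ) : j % g ∈ Set.Iio n := (Nat.mod_lt j hg).trans_le hgn
  obtain ⟨hquot_cast, hrem_cast⟩ := Prod.mk.inj h
  have hquot : k / g = k' / g :=
    CharP.natCast_injOn_Iio (ZMod m) m (hquot_lt hk) (hquot_lt hk') hquot_cast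
  rw [hquot, Nat.cast_add, Nat.cast_add] at hrem_cast
  have hrem : k % g = k' % g :=
    CharP.natCast_injOn_Iio (ZMod n) n (hrem_lt k) (hrem_lt k') (add_left_cancel hrem_cast)
  rw [← Nat.div_add_mod k g, ← Nat.div_add_mod k' g, hquot, hrem]

theorem seed_injective_general (ℓ m n : ℕ) :
    Function.Injective
      (fun k : Fin (ℓ * m * n / Nat.lcm (Nat.lcm ℓ m) n) => seed ℓ m n k.val) := by
  intro k k' h
  by_cases hlcm : (ℓ.lcm m).lcm n = 0
  · rw [hlcm, Nat.div_zero] at k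
    exact k.elim0
  obtain ⟨⟨-, hm⟩, hn⟩ : (0 < ℓ ∧ 0 < m) ∧ 0 < n := by
    simpa only [Nat.lcm_pos_iff] using Nat.pos_of_ne_zero hlcm
  have hk_lt (j : Fin (ℓ * m * n / (ℓ.lcm m).lcm n)) :
      j.val ∈ Set.Iio (ℓ.gcd m * (ℓ.lcm m).gcd n) := by
    rw [Set.mem_Iio, ← Nat.mul_mul_div_lcm_lcm hlcm]
    exact j.isLt
  simp only [seed, Nat.mul_comm n, Nat.mul_div_lcm hlcm, Prod.mk.injEq] at h
  exact Fin.ext <| injOn_Iio_mul_divMod_cast (Nat.gcd_le_right ℓ hm) (Nat.gcd_le_right _ hn)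
    (hk_lt k) (hk_lt k') (Prod.ext h.2.1 h.2.2)

theorem seed_injective (ℓ m n : ℕ) (hl : 2 ≤ ℓ) (hm : 2 ≤ m) (hn : 2 ≤ n) :
    Function.Injective
      (fun k : Fin (ℓ * m * n / Nat.lcm (Nat.lcm ℓ m) n) => seed ℓ m n k.val) :=
  seed_injective_general ℓ m n
end
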